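/- arXiv:1305.5613 — 4 statements merged into one kernel-verified Lean document; each statement's English description precedes it below -/
import Mathlib

section
/- Let V be a real inner product space and let α₁, …, αₙ be vectors in V, each nonzero, such that for some constant σ with -1/(n-1) < σ < 1 one has ⟨αᵢ, αⱼ⟩ / (‖αᵢ‖ ‖αⱼ‖) = σ for all i ≠ j. Then α₁, …, αₙ are linearly independent. -/
open scoped RealInnerProductSpace

/-- Vectors with all pairwise "angle cosines" equal to a constant
`σ ∈ (-1/(n-1), 1)` are linearly independent. -/
theorem uniform_angle_linearIndependent
    {V : Type*} [NormedAddCommGroup V] [InnerProductSpace ℝ V]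
    {n : ℕ} (hn : 1 ≤ n) (α : Fin n → V) (hα : ∀ i, α i ≠ 0)
    (σ : ℝ) (hσ₁ : -1 / ((n : ℝ) - 1) < σ) (hσ₂ : σ < 1)
    (hangle : ∀ i j, i ≠ j → ⟪α i, α j⟫ / (‖α i‖ * ‖α j‖) = σ) :
    LinearIndependent ℝ α := by
  rw [Fintype.linearIndependent_iff]
  intro g hg
  set d : Fin n → ℝ := fun i => g i * ‖α i‖ with hd
  have hnormpos : ∀ i, (0:ℝ) < ‖α i‖ := fun i => norm_pos_iff.mpr (hα i)
  have heach : ∀ j k, g j * g k * ⟪α j, α k⟫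
      = σ * (d j * d k) + (if j = k then (1 - σ) * d j ^ 2 else 0) := by
    intro j k
    by_cases h : j = k
    · subst h
      rw [if_pos rfl, real_inner_self_eq_norm_sq]
      simp only [hd]
      ring
    · have h1 := hangle j k h
      have h2 : ⟪α j, α k⟫ = σ * (‖α j‖ * ‖α k‖) :=
        (div_eq_iff (mul_ne_zero (hnormpos j).ne' (hnormpos k).ne')).mp h1
      simp only [if_neg h, h2, hd]
      ring
  have hkey : (1 - σ) * ∑ j, d j ^ 2 + σ * (∑ j, d j) ^ 2 = 0 := by
    have h0 : ⟪∑ j, g j • α j, ∑ j, g j • α j⟫ = 0 := by rw [hg]; simp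
    rw [sum_inner] at h0
    simp_rw [inner_sum, real_inner_smul_left, real_inner_smul_right,
      ← mul_assoc, heach] at h0
    rw [← h0]
    have e1 : ∀ x : Fin n, ∑ y, σ * (d x * d y) = σ * d x * ∑ y, d y := by
      intro x; rw [Finset.mul_sum]; exact Finset.sum_congr rfl fun y _ => by ring
    have e2 : ∀ x : Fin n, (∑ y, if x = y then (1 - σ) * d x ^ 2 else 0)
        = (1 - σ) * d x ^ 2 := by
      intro x; simp
    rw [Finset.sum_congr rfl (fun x _ => Finset.sum_add_distrib),
      Finset.sum_add_distrib,
      Finset.sum_congr rfl (fun x _ => e1 x),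
      Finset.sum_congr rfl (fun x _ => e2 x),
      ← Finset.sum_mul, ← Finset.mul_sum, ← Finset.mul_sum]
    ring
  have hS : (0:ℝ) ≤ ∑ j, d j ^ 2 := Finset.sum_nonneg fun j _ => sq_nonneg _
  have hT : (∑ j, d j) ^ 2 ≤ (n : ℝ) * ∑ j, d j ^ 2 := by
    have := sq_sum_le_card_mul_sum_sq (s := (Finset.univ : Finset (Fin n))) (f := d)
    simpa using this
  have hT0 : (0:ℝ) ≤ (∑ j, d j) ^ 2 := sq_nonneg _
  have h1σ : (0:ℝ) < 1 - σ := by linarith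
  have hnσ : (0:ℝ) < 1 + ((n:ℝ) - 1) * σ := by
    rcases eq_or_lt_of_le hn with h | h
    · have : (n:ℝ) = 1 := by exact_mod_cast h.symm
      rw [this]; norm_num
    · have hn2 : (0:ℝ) < (n:ℝ) - 1 := by
        have : (2:ℝ) ≤ (n:ℝ) := by exact_mod_cast h
        linarith
      have := (div_lt_iff₀ hn2).mp hσ₁
      nlinarith
  have hSzero : ∑ j, d j ^ 2 = 0 := by
    rcases le_or_gt 0 σ with hs | hs
    · nlinarith [mul_nonneg hs hT0]
    · nlinarith [mul_le_mul_of_nonpos_left hT hs.le]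
  intro i
  have hdi : d i = 0 := by
    have := (Finset.sum_eq_zero_iff_of_nonneg (fun j _ => sq_nonneg (d j))).mp hSzero i
      (Finset.mem_univ i)
    exact pow_eq_zero_iff (by norm_num) |>.mp this
  have := hnormpos i
  have : g i * ‖α i‖ = 0 := hdi
  rcases mul_eq_zero.mp this with h | h
  · exact h
  · exact absurd h (ne_of_gt (hnormpos i))
end

section
/- Let α₁, …, αₙ be unit vectors in a real inner product space with ⟨αᵢ, αⱼ⟩ = σ for all i ≠ j, where -1/(n-1) < σ < 1. Define α₀ = (α₁ + ⋯ + αₙ)/n, c = sqrt((1 + (n-1)σ)/(1-σ)), and α̃ᵢ = α₀ + c(αᵢ - α₀). Then for all i ≠ j, ⟨α̃ᵢ, α̃ⱼ⟩ = 0. -/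
/-! With `T = 1 + (n-1)σ`, the centroid `α₀` satisfies `⟪α₀, α₀⟫ = ⟪α₀, αᵢ⟫ = T/n`. Expanding,
`⟪α₀ + c(αᵢ - α₀), α₀ + c(αⱼ - α₀)⟫ = T/n - c²(T/n - σ) = T/n - c²(1 - σ)/n`, which vanishes
exactly when `c² = T/(1 - σ)`; the bounds on `σ` make `T/(1 - σ)` positive, so this `c` exists. -/

open scoped RealInnerProductSpace

section Equiangular

variable {V ι : Type*} [NormedAddCommGroup V] [InnerProductSpace ℝ V] [Fintype ι]
  {α : ι → V} {σ : ℝ}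

theorem inner_sum_of_equiangular [DecidableEq ι] (hunit : ∀ i, ⟪α i, α i⟫ = 1)
    (hangle : ∀ i j, i ≠ j → ⟪α i, α j⟫ = σ) (k : ι) :
    ⟪α k, ∑ l, α l⟫ = 1 + ((Fintype.card ι : ℝ) - 1) * σ := by
  have hgram : ∀ l, ⟪α k, α l⟫ = σ + (1 - σ) * if k = l then 1 else 0 := by
    intro l
    by_cases hkl : k = l
    · rw [hkl, hunit, if_pos rfl]; ring
    · simp [hangle k l hkl, hkl]
  simp only [inner_sum, hgram, Finset.sum_add_distrib, ← Finset.mul_sum, Finset.sum_ite_eq,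
    Finset.mem_univ, if_true, Finset.sum_const, Finset.card_univ, nsmul_eq_mul]
  ring

theorem inner_sum_sum_of_equiangular (hunit : ∀ i, ⟪α i, α i⟫ = 1)
    (hangle : ∀ i j, i ≠ j → ⟪α i, α j⟫ = σ) :
    ⟪∑ l, α l, ∑ l, α l⟫ =
      (Fintype.card ι : ℝ) * (1 + ((Fintype.card ι : ℝ) - 1) * σ) := by
  classical
  simp only [sum_inner, inner_sum_of_equiangular hunit hangle, Finset.sum_const,
    Finset.card_univ, nsmul_eq_mul]

end Equiangular

theorem inner_add_smul_sub_add_smul_sub {V : Type*} [NormedAddCommGroup V]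
    [InnerProductSpace ℝ V] {m x y : V} {t : ℝ} (c : ℝ)
    (hm : ⟪m, m⟫ = t) (hx : ⟪x, m⟫ = t) (hy : ⟪m, y⟫ = t) :
    ⟪m + c • (x - m), m + c • (y - m)⟫ = t - c ^ 2 * (t - ⟪x, y⟫) := by
  simp only [inner_add_left, inner_add_right, inner_sub_left, inner_sub_right,
    real_inner_smul_left, real_inner_smul_right, hm, hx, hy]
  ring

theorem tilde_vectors_orthogonal_general
    {V : Type*} [NormedAddCommGroup V] [InnerProductSpace ℝ V]
    {n : ℕ} (α : Fin n → V)
    (hunit : ∀ i, ⟪α i, α i⟫ = 1)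
    (σ : ℝ) (hσ₁ : -1 / ((n : ℝ) - 1) < σ) (hσ₂ : σ < 1)
    (hangle : ∀ i j, i ≠ j → ⟪α i, α j⟫ = σ) :
    ∀ i j, i ≠ j →
      ⟪((1 / (n : ℝ)) • (∑ k, α k)) +
          (Real.sqrt ((1 + ((n : ℝ) - 1) * σ) / (1 - σ))) •
            (α i - (1 / (n : ℝ)) • (∑ k, α k)),
        ((1 / (n : ℝ)) • (∑ k, α k)) +
          (Real.sqrt ((1 + ((n : ℝ) - 1) * σ) / (1 - σ))) •
            (α j - (1 / (n : ℝ)) • (∑ k, α k))⟫ = 0 := by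
  intro i j hij
  have hsum := inner_sum_of_equiangular hunit hangle
  have hsum_sum := inner_sum_sum_of_equiangular hunit hangle
  simp only [Fintype.card_fin] at hsum hsum_sum
  have hn : (1 : ℝ) < n := by
    have := Fin.val_ne_of_ne hij
    exact_mod_cast (by omega : 1 < n)
  have hT : 0 < 1 + ((n : ℝ) - 1) * σ := by
    have := (div_lt_iff₀ (sub_pos.mpr hn)).mp hσ₁
    linarith
  have hc : Real.sqrt ((1 + ((n : ℝ) - 1) * σ) / (1 - σ)) ^ 2 * (1 - σ) =
      1 + ((n : ℝ) - 1) * σ := by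
    rw [Real.sq_sqrt (div_pos hT (sub_pos.mpr hσ₂)).le, div_mul_cancel₀ _ (sub_pos.mpr hσ₂).ne']
  rw [inner_add_smul_sub_add_smul_sub (t := 1 / n * (1 + ((n : ℝ) - 1) * σ)) _
    (by rw [real_inner_smul_left, real_inner_smul_right, hsum_sum]; field_simp)
    (by rw [real_inner_smul_right, hsum])
    (by rw [real_inner_smul_left, real_inner_comm, hsum]), hangle i j hij]
  field_simp
  linear_combination -hc

/-- The explicit orthogonalization: for unit vectors with all pairwise inner
products equal to `σ ∈ (-1/(n-1), 1)`, the vectors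
`α̃ᵢ = α₀ + c (αᵢ - α₀)` with `α₀ = (α₁ + ⋯ + αₙ)/n` and
`c = √((1+(n-1)σ)/(1-σ))` are pairwise orthogonal. -/
theorem tilde_vectors_orthogonal
    {V : Type*} [NormedAddCommGroup V] [InnerProductSpace ℝ V]
    {n : ℕ} (hn : 1 ≤ n) (α : Fin n → V)
    (hunit : ∀ i, ⟪α i, α i⟫ = 1)
    (σ : ℝ) (hσ₁ : -1 / ((n : ℝ) - 1) < σ) (hσ₂ : σ < 1)
    (hangle : ∀ i j, i ≠ j → ⟪α i, α j⟫ = σ) :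
    ∀ i j, i ≠ j →
      ⟪((1 / (n : ℝ)) • (∑ k, α k)) +
          (Real.sqrt ((1 + ((n : ℝ) - 1) * σ) / (1 - σ))) •
            (α i - (1 / (n : ℝ)) • (∑ k, α k)),
        ((1 / (n : ℝ)) • (∑ k, α k)) +
          (Real.sqrt ((1 + ((n : ℝ) - 1) * σ) / (1 - σ))) •
            (α j - (1 / (n : ℝ)) • (∑ k, α k))⟫ = 0 :=
  tilde_vectors_orthogonal_general α hunit σ hσ₁ hσ₂ hangle
end

section
/- Let X, Y be Banach spaces, U ⊆ X open, F : U → Y continuously differentiable, x₀ ∈ U, and suppose D = dF(x₀) is surjective with a bounded linear right inverse Q : Y → X with ‖Q‖ ≤ c. Suppose there is δ > 0 with the closed ball B_δ(x₀) ⊆ U such that ‖dF(x) − D‖ ≤ 1/(2c) for all x ∈ B_δ(x₀), and suppose ‖F(x₀)‖ ≤ δ/(4c). Then there exists x ∈ B_δ(x₀) with F(x) = 0, x − x₀ ∈ range(Q), and ‖x − x₀‖ ≤ 2c‖F(x₀)‖. -/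
/-!
On the slice `x₀ + range Q` the map `G y = F (x₀ + Q y)` from `Y` to itself has derivative
`dF (x₀ + Q y) ∘ Q`, which differs from `dF x₀ ∘ Q = id` by at most `‖Q‖ / (2c) ≤ 1/2` as long as
`x₀ + Q y` stays in the `δ`-ball. So `G` is `1/2`-close to the identity on the ball of radius
`2‖F x₀‖`, and the contraction-mapping argument shows that it maps this ball onto the ball of
radius `‖F x₀‖` about `G 0 = F x₀`, which contains `0`.
-/

open Set Metric
open scoped NNReal

theorem Convex.approximatesLinearOn_of_norm_hasFDerivWithinAt_sub_le {E F : Type*}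
    [NormedAddCommGroup E] [NormedSpace ℝ E] [NormedAddCommGroup F] [NormedSpace ℝ F]
    {f : E → F} {f' : E → E →L[ℝ] F} {φ : E →L[ℝ] F} {s : Set E} {c : ℝ≥0} (hs : Convex ℝ s)
    (hf : ∀ x ∈ s, HasFDerivWithinAt f (f' x) s x) (bound : ∀ x ∈ s, ‖f' x - φ‖ ≤ c) :
    ApproximatesLinearOn f φ s c :=
  fun _ hx _ hy => hs.norm_image_sub_le_of_norm_hasFDerivWithin_le' hf bound hy hx

section

variable {𝕜 : Type*} [NontriviallyNormedField 𝕜]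
  {E F G : Type*} [NormedAddCommGroup E] [NormedSpace 𝕜 E] [NormedAddCommGroup F]
  [NormedSpace 𝕜 F] [NormedAddCommGroup G] [NormedSpace 𝕜 G]

theorem ApproximatesLinearOn.comp_const_add_clm {f : E → F} {f' : E →L[𝕜] F} {s : Set E}
    {c : ℝ≥0} (hf : ApproximatesLinearOn f f' s c) (a : E) (Q : G →L[𝕜] E) :
    ApproximatesLinearOn (fun y => f (a + Q y)) (f'.comp Q) ((fun y => a + Q y) ⁻¹' s)
      (c * ‖Q‖₊) := by
  intro y hy y' hy'
  have hdiff : a + Q y - (a + Q y') = Q (y - y') := by rw [map_sub]; abel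
  calc ‖f (a + Q y) - f (a + Q y') - f'.comp Q (y - y')‖
      = ‖f (a + Q y) - f (a + Q y') - f' (a + Q y - (a + Q y'))‖ := by rw [hdiff]; rfl
    _ ≤ c * ‖Q (y - y')‖ := by simpa only [hdiff] using hf _ hy _ hy'
    _ ≤ c * (‖Q‖ * ‖y - y'‖) := by gcongr; exact Q.le_opNorm _
    _ = (c * ‖Q‖₊ : ℝ≥0) * ‖y - y'‖ := by push_cast; ring

def ContinuousLinearMap.idNonlinearRightInverse :
    (ContinuousLinearMap.id 𝕜 E).NonlinearRightInverse where
  toFun := id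
  nnnorm := 1
  bound' y := by simp
  right_inv' _ := rfl

end

theorem implicit_function_with_right_inverse_general
    {X Y : Type*} [NormedAddCommGroup X] [NormedSpace ℝ X]
    [NormedAddCommGroup Y] [NormedSpace ℝ Y] [CompleteSpace Y]
    (U : Set X) (F : X → Y) (dF : X → X →L[ℝ] Y)
    (hdF : ∀ x ∈ U, HasFDerivAt F (dF x) x)
    (x₀ : X)
    (Q : Y →L[ℝ] X) (hQright : ∀ y : Y, dF x₀ (Q y) = y)
    (c : ℝ) (hc : 0 < c) (hQ : ‖Q‖ ≤ c)
    (δ : ℝ) (hball : Metric.closedBall x₀ δ ⊆ U)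
    (hder : ∀ x ∈ Metric.closedBall x₀ δ, ‖dF x - dF x₀‖ ≤ 1 / (2 * c))
    (hF₀ : ‖F x₀‖ ≤ δ / (4 * c)) :
    ∃ x ∈ Metric.closedBall x₀ δ,
      F x = 0 ∧ x - x₀ ∈ Set.range Q ∧ ‖x - x₀‖ ≤ 2 * c * ‖F x₀‖ := by
  set r := 2 * ‖F x₀‖
  have hcr : c * r ≤ δ / 2 := by
    calc c * r ≤ c * (2 * (δ / (4 * c))) := by unfold r; gcongr
      _ = δ / 2 := by field_simp; ring
  have hQy : ∀ y ∈ closedBall (0 : Y) r, ‖Q y‖ ≤ c * r := fun y hy =>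
    (Q.le_of_opNorm_le hQ y).trans (by gcongr; simpa using hy)
  have hslice : closedBall (0 : Y) r ⊆ (fun y => x₀ + Q y) ⁻¹' closedBall x₀ δ := fun y hy => by
    simp only [mem_preimage, mem_closedBall, dist_eq_norm, add_sub_cancel_left]
    linarith [hQy y hy, (by positivity : 0 ≤ c * r)]
  have hF : ApproximatesLinearOn F (dF x₀) (closedBall x₀ δ) (1 / (2 * c)).toNNReal :=
    (convex_closedBall x₀ δ).approximatesLinearOn_of_norm_hasFDerivWithinAt_sub_le
      (fun x hx => (hdF x (hball hx)).hasFDerivWithinAt)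
      (fun x hx => (hder x hx).trans (Real.le_coe_toNNReal _))
  have hDQ : (dF x₀).comp Q = ContinuousLinearMap.id ℝ Y := ContinuousLinearMap.ext hQright
  have hG : ApproximatesLinearOn (fun y => F (x₀ + Q y)) (ContinuousLinearMap.id ℝ Y)
      (closedBall 0 r) (1 / 2) := by
    refine hDQ ▸ ((hF.comp_const_add_clm x₀ Q).mono_set hslice).mono_num ?_
    rw [← NNReal.coe_le_coe]
    push_cast
    rw [Real.coe_toNNReal _ (by positivity)]
    calc 1 / (2 * c) * ‖Q‖ ≤ 1 / (2 * c) * c := by gcongr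
      _ = 1 / 2 := by field_simp
  obtain ⟨y, hy, hy0⟩ := hG.surjOn_closedBall_of_nonlinearRightInverse
    ContinuousLinearMap.idNonlinearRightInverse (by positivity) subset_rfl
    (show (0 : Y) ∈ closedBall (F (x₀ + Q 0)) ((1⁻¹ - 1 / 2) * r) by simp [r]; linarith)
  refine ⟨x₀ + Q y, hslice hy, hy0, ⟨y, by abel⟩, ?_⟩
  rw [add_sub_cancel_left]
  linarith [hQy y hy]

/-- Quantitative implicit function theorem with a bounded right inverse
(Proposition A.3.4 of McDuff–Salamon). -/
theorem implicit_function_with_right_inverse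
    {X Y : Type*} [NormedAddCommGroup X] [NormedSpace ℝ X] [CompleteSpace X]
    [NormedAddCommGroup Y] [NormedSpace ℝ Y] [CompleteSpace Y]
    (U : Set X) (hU : IsOpen U) (F : X → Y) (dF : X → X →L[ℝ] Y)
    (hdF : ∀ x ∈ U, HasFDerivAt F (dF x) x)
    (hdFcont : ContinuousOn dF U)
    (x₀ : X) (hx₀ : x₀ ∈ U)
    (hsurj : Function.Surjective (dF x₀))
    (Q : Y →L[ℝ] X) (hQright : ∀ y : Y, dF x₀ (Q y) = y)
    (c : ℝ) (hc : 0 < c) (hQ : ‖Q‖ ≤ c)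
    (δ : ℝ) (hδ : 0 < δ) (hball : Metric.closedBall x₀ δ ⊆ U)
    (hder : ∀ x ∈ Metric.closedBall x₀ δ, ‖dF x - dF x₀‖ ≤ 1 / (2 * c))
    (hF₀ : ‖F x₀‖ ≤ δ / (4 * c)) :
    ∃ x ∈ Metric.closedBall x₀ δ,
      F x = 0 ∧ x - x₀ ∈ Set.range Q ∧ ‖x - x₀‖ ≤ 2 * c * ‖F x₀‖ :=
  implicit_function_with_right_inverse_general U F dF hdF x₀ Q hQright c hc hQ δ hball hder hF₀
end

section
/- With u : ℝ/2πℤ → ℝ^{2q(t)} the normalized truncated heat kernel embedding of S¹ as above and q(t) → ∞ appropriately (e.g. q(t) ≥ t^{-1}), as t → 0⁺ one has |u'(x)|² → 1 and t·|u''(x)|² → 3/2, uniformly in x. -/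
/-!
Each coordinate pair of `heatCurve q t` traces a circle `x ↦ A e^{-k²t/2} (cos kx, sin kx)`, and
differentiation multiplies its radius by `k`. Hence `t^m |u^{(m+1)}(x)|²` does not depend on `x`:
with `s = √t` it equals `(4/√π) s ∑_{k ≤ q} g(ks)` for `g(y) = y^{2m+2} e^{-y²}`, a right Riemann
sum of `g` over `[0, qs]`. As `g'` is integrable, this sum is within `s ∫ |g'|` of `∫_0^{qs} g`,
and `qs ≥ 1/s → ∞`, so it tends to `(4/√π) ∫_0^∞ g = (2/√π) Γ(m + 3/2) = (2m+1)‼/2^m`: this is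
`1` for `m = 0` and `3/2` for `m = 1`.
-/

open scoped Topology

/-- The truncated normalized heat kernel embedding of `S¹`. -/
noncomputable def heatCurve (q : ℕ) (t x : ℝ) : EuclideanSpace ℝ (Fin q × Fin 2) :=
  WithLp.toLp 2 fun p =>
    Real.sqrt (2 / Real.pi) * (4 * Real.pi) ^ ((1 : ℝ) / 4) * t ^ ((3 : ℝ) / 4) *
      (Real.exp (-(((p.1 : ℝ) + 1) ^ 2) * t / 2) *
        (if p.2 = (0 : Fin 2) then Real.cos (((p.1 : ℝ) + 1) * x)
          else Real.sin (((p.1 : ℝ) + 1) * x)))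

open Real Filter MeasureTheory

section HarmonicCurve

variable {ι : Type*} (a ω φ : ι → ℝ)

noncomputable def harmonicCurve (x : ℝ) : EuclideanSpace ℝ (ι × Fin 2) :=
  WithLp.toLp 2 fun p =>
    a p.1 * if p.2 = 0 then cos (ω p.1 * x + φ p.1) else sin (ω p.1 * x + φ p.1)

variable [Fintype ι]

theorem norm_harmonicCurve_sq (x : ℝ) : ‖harmonicCurve a ω φ x‖ ^ 2 = ∑ k, a k ^ 2 := by
  simp only [EuclideanSpace.norm_sq_eq, Fintype.sum_prod_type, Fin.sum_univ_two, harmonicCurve,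
    Real.norm_eq_abs, sq_abs]
  refine Finset.sum_congr rfl fun k _ => ?_
  simp only [↓reduceIte, if_neg one_ne_zero, mul_pow, ← mul_add, cos_sq_add_sin_sq, mul_one]

theorem hasDerivAt_harmonicCurve (x : ℝ) :
    HasDerivAt (harmonicCurve a ω φ) (harmonicCurve (a * ω) ω (φ + fun _ => π / 2) x) x := by
  refine (EuclideanSpace.equiv (ι × Fin 2) ℝ).symm.hasFDerivAt.comp_hasDerivAt x
    (hasDerivAt_pi.2 fun ⟨k, j⟩ => ?_)
  have hθ : HasDerivAt (fun x => ω k * x + φ k) (ω k) x := by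
    simpa using ((hasDerivAt_id x).const_mul (ω k)).add_const (φ k)
  fin_cases j
  · show HasDerivAt (fun x => a k * cos (ω k * x + φ k))
      (a k * ω k * cos (ω k * x + (φ k + π / 2))) x
    rw [← add_assoc, cos_add_pi_div_two]
    exact (hθ.cos.const_mul (a k)).congr_deriv (by ring)
  · show HasDerivAt (fun x => a k * sin (ω k * x + φ k))
      (a k * ω k * sin (ω k * x + (φ k + π / 2))) x
    rw [← add_assoc, sin_add_pi_div_two]
    exact (hθ.sin.const_mul (a k)).congr_deriv (by ring)

theorem deriv_harmonicCurve :
    deriv (harmonicCurve a ω φ) = harmonicCurve (a * ω) ω (φ + fun _ => π / 2) :=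
  funext fun x => (hasDerivAt_harmonicCurve a ω φ x).deriv

theorem iteratedDeriv_harmonicCurve (m : ℕ) :
    iteratedDeriv m (harmonicCurve a ω φ) =
      harmonicCurve (a * ω ^ m) ω (φ + fun _ => m * (π / 2)) := by
  induction m with
  | zero =>
    simp only [iteratedDeriv_zero, pow_zero, mul_one, Nat.cast_zero, zero_mul]
    congr
    ext
    simp
  | succ m ih =>
    rw [iteratedDeriv_succ, ih, deriv_harmonicCurve, mul_assoc, ← pow_succ, add_assoc]
    congr 2
    ext
    simp only [Pi.add_apply]
    push_cast
    ring

end HarmonicCurve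

theorem heatCurve_eq_harmonicCurve (q : ℕ) (t : ℝ) :
    heatCurve q t = harmonicCurve
      (fun k : Fin q => √(2 / π) * (4 * π) ^ ((1 : ℝ) / 4) * t ^ ((3 : ℝ) / 4) *
        exp (-((k + 1 : ℝ) ^ 2) * t / 2))
      (fun k => k + 1) 0 := by
  funext x
  ext p
  simp [heatCurve, harmonicCurve, mul_assoc]

theorem heatCurve_amplitude_sq {s : ℝ} (hs : 0 ≤ s) :
    (√(2 / π) * (4 * π) ^ ((1 : ℝ) / 4) * (s ^ 2) ^ ((3 : ℝ) / 4)) ^ 2 = 4 / √π * s ^ 3 := by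
  have h4π : ((4 * π) ^ ((1 : ℝ) / 4)) ^ 2 = 2 * √π := by
    rw [← rpow_natCast, ← rpow_mul (by positivity), show (1 : ℝ) / 4 * (2 : ℕ) = 1 / 2 by norm_num,
      ← sqrt_eq_rpow, show (4 : ℝ) * π = 2 ^ 2 * π by norm_num, sqrt_mul (by norm_num),
      sqrt_sq (by norm_num)]
  have hs3 : ((s ^ 2) ^ ((3 : ℝ) / 4)) ^ 2 = s ^ 3 := by
    rw [← rpow_natCast, ← rpow_mul (by positivity), ← rpow_natCast s 2, ← rpow_mul hs]
    norm_num
  have hπ : √π ^ 2 = π := sq_sqrt pi_pos.le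
  rw [mul_pow, mul_pow, sq_sqrt (by positivity), h4π, hs3]
  field_simp
  rw [hπ]
  ring

noncomputable def rightRiemannSum (g : ℝ → ℝ) (h : ℝ) (n : ℕ) : ℝ :=
  h * ∑ k ∈ Finset.range n, g ((k + 1) * h)

section RiemannSum

variable {g g' : ℝ → ℝ}

theorem abs_mul_sub_integral_le_of_hasDerivAt (hg : ∀ y, HasDerivAt g (g' y) y)
    (hg' : Continuous g') {a b : ℝ} (hab : a ≤ b) :
    |(b - a) * g b - ∫ y in a..b, g y| ≤ (b - a) * ∫ y in a..b, |g' y| := by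
  have hgc : Continuous g := continuous_iff_continuousAt.2 fun y => (hg y).continuousAt
  have hosc : ∀ y ∈ Set.uIoc a b, ‖g b - g y‖ ≤ ∫ z in a..b, |g' z| := by
    intro y hy
    rw [Set.uIoc_of_le hab] at hy
    rw [← intervalIntegral.integral_eq_sub_of_hasDerivAt (fun z _ => hg z)
      (hg'.intervalIntegrable y b), norm_eq_abs]
    calc |∫ z in y..b, g' z| ≤ ∫ z in y..b, |g' z| :=
          intervalIntegral.abs_integral_le_integral_abs hy.2
      _ ≤ ∫ z in a..b, |g' z| :=
          intervalIntegral.integral_mono_interval hy.1.le hy.2 le_rfl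
            (.of_forall fun z => abs_nonneg _) (hg'.abs.intervalIntegrable _ _)
  have h := intervalIntegral.norm_integral_le_of_norm_le_const hosc
  rw [intervalIntegral.integral_sub intervalIntegrable_const (hgc.intervalIntegrable a b),
    intervalIntegral.integral_const, smul_eq_mul, norm_eq_abs,
    abs_of_nonneg (sub_nonneg.2 hab)] at h
  linarith

theorem abs_rightRiemannSum_sub_integral_le (hg : ∀ y, HasDerivAt g (g' y) y)
    (hg' : Continuous g') {h : ℝ} (hh : 0 ≤ h) (n : ℕ) :
    |rightRiemannSum g h n - ∫ y in 0..n * h, g y| ≤ h * ∫ y in 0..n * h, |g' y| := by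
  have hgc : Continuous g := continuous_iff_continuousAt.2 fun y => (hg y).continuousAt
  induction n with
  | zero => simp [rightRiemannSum]
  | succ n ih =>
    have hsplit : ∀ f : ℝ → ℝ, Continuous f → ∫ y in 0..(n + 1 : ℕ) * h, f y =
        (∫ y in 0..n * h, f y) + ∫ y in n * h..(n + 1 : ℕ) * h, f y :=
      fun f hf => (intervalIntegral.integral_add_adjacent_intervals
        (hf.intervalIntegrable _ _) (hf.intervalIntegrable _ _)).symm
    have hlast := abs_mul_sub_integral_le_of_hasDerivAt hg hg'
      (mul_le_mul_of_nonneg_right (Nat.cast_le.2 n.le_succ) hh)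
    have hsum :
        rightRiemannSum g h (n + 1) = rightRiemannSum g h n + h * g ((n + 1 : ℕ) * h) := by
      simp only [rightRiemannSum, Finset.sum_range_succ, Nat.cast_succ, mul_add]
    rw [show ((n + 1 : ℕ) : ℝ) * h - n * h = h by push_cast; ring] at hlast
    rw [hsplit g hgc, hsplit _ hg'.abs, hsum]
    calc _ = |(rightRiemannSum g h n - ∫ y in 0..n * h, g y) +
          (h * g ((n + 1 : ℕ) * h) - ∫ y in n * h..(n + 1 : ℕ) * h, g y)| := by ring_nf
      _ ≤ _ := (abs_add_le _ _).trans (add_le_add ih hlast)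
      _ = _ := by ring

theorem tendsto_rightRiemannSum_integral_Ioi {α : Type*} {l : Filter α} [l.IsCountablyGenerated]
    (hg : ∀ y, HasDerivAt g (g' y) y) (hg' : Continuous g')
    (hgi : IntegrableOn g (Set.Ioi 0)) (hg'i : IntegrableOn g' (Set.Ioi 0))
    {h : α → ℝ} {N : α → ℕ} (hh : Tendsto h l (𝓝[≥] 0))
    (hN : Tendsto (fun i => N i * h i) l atTop) :
    Tendsto (fun i => rightRiemannSum g (h i) (N i)) l (𝓝 (∫ y in Set.Ioi 0, g y)) := by
  have herr : Tendsto (fun i => rightRiemannSum g (h i) (N i) - ∫ y in 0..N i * h i, g y) l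
      (𝓝 0) := by
    refine squeeze_zero_norm' ?_ (by simpa using
      (tendsto_nhds_of_tendsto_nhdsWithin hh).mul_const (∫ y in Set.Ioi 0, |g' y|))
    filter_upwards [hh self_mem_nhdsWithin, hN (eventually_ge_atTop 0)] with i hi hNi
    calc ‖_‖ ≤ h i * ∫ y in 0..N i * h i, |g' y| :=
          abs_rightRiemannSum_sub_integral_le hg hg' hi _
      _ ≤ h i * ∫ y in Set.Ioi 0, |g' y| := by
          gcongr
          rw [intervalIntegral.integral_of_le hNi]
          exact setIntegral_mono_set hg'i.abs (.of_forall fun _ => abs_nonneg _)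
            Set.Ioc_subset_Ioi_self.eventuallyLE
  simpa using herr.add (intervalIntegral_tendsto_integral_Ioi 0 hgi hN)

end RiemannSum

theorem hasDerivAt_pow_mul_exp_neg_sq (n : ℕ) (y : ℝ) :
    HasDerivAt (fun y => y ^ n * exp (-y ^ 2))
      ((n * y ^ (n - 1) - 2 * y ^ (n + 1)) * exp (-y ^ 2)) y := by
  refine ((hasDerivAt_pow n y).mul (hasDerivAt_pow 2 y).neg.exp).congr_deriv ?_
  simp only [Pi.neg_apply]
  push_cast
  ring

theorem integrableOn_pow_mul_exp_neg_sq (n : ℕ) :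
    IntegrableOn (fun y : ℝ => y ^ n * exp (-y ^ 2)) (Set.Ioi 0) := by
  refine (integrableOn_rpow_mul_exp_neg_mul_sq one_pos
    (neg_one_lt_zero.trans_le n.cast_nonneg)).congr_fun (fun y _ => ?_) measurableSet_Ioi
  simp [rpow_natCast]

theorem integrableOn_deriv_pow_mul_exp_neg_sq (n : ℕ) :
    IntegrableOn (fun y : ℝ => (n * y ^ (n - 1) - 2 * y ^ (n + 1)) * exp (-y ^ 2))
      (Set.Ioi 0) := by
  have h := ((integrableOn_pow_mul_exp_neg_sq (n - 1)).const_mul (n : ℝ)).sub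
    ((integrableOn_pow_mul_exp_neg_sq (n + 1)).const_mul 2)
  refine IntegrableOn.congr_fun h (fun y _ => ?_) measurableSet_Ioi
  simp only [Pi.sub_apply]
  ring

theorem integral_pow_mul_exp_neg_sq (n : ℕ) :
    ∫ y in Set.Ioi 0, y ^ n * exp (-y ^ 2) = Gamma ((n + 1) / 2) / 2 := by
  have h := integral_rpow_mul_exp_neg_rpow two_pos (neg_one_lt_zero.trans_le n.cast_nonneg)
  simp only [rpow_natCast, rpow_two] at h
  rw [h]
  ring

theorem tendsto_rightRiemannSum_pow_mul_exp_neg_sq (n : ℕ) {α : Type*} {l : Filter α}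
    [l.IsCountablyGenerated] {h : α → ℝ} {N : α → ℕ} (hh : Tendsto h l (𝓝[≥] 0))
    (hN : Tendsto (fun i => N i * h i) l atTop) :
    Tendsto (fun i => rightRiemannSum (fun y => y ^ n * exp (-y ^ 2)) (h i) (N i)) l
      (𝓝 (Gamma ((n + 1) / 2) / 2)) :=
  integral_pow_mul_exp_neg_sq n ▸ tendsto_rightRiemannSum_integral_Ioi
    (hasDerivAt_pow_mul_exp_neg_sq n) (by fun_prop) (integrableOn_pow_mul_exp_neg_sq n)
    (integrableOn_deriv_pow_mul_exp_neg_sq n) hh hN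

theorem pow_mul_norm_iteratedDeriv_heatCurve_sq (m q : ℕ) {t : ℝ} (ht : 0 ≤ t) (x : ℝ) :
    t ^ m * ‖iteratedDeriv (m + 1) (heatCurve q t) x‖ ^ 2 =
      4 / √π * rightRiemannSum (fun y => y ^ (2 * m + 2) * exp (-y ^ 2)) (√t) q := by
  obtain ⟨s, hs, rfl⟩ : ∃ s, 0 ≤ s ∧ t = s ^ 2 := ⟨√t, sqrt_nonneg t, (sq_sqrt ht).symm⟩
  rw [heatCurve_eq_harmonicCurve, iteratedDeriv_harmonicCurve, norm_harmonicCurve_sq,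
    sqrt_sq hs, rightRiemannSum, ← Fin.sum_univ_eq_sum_range, Finset.mul_sum, Finset.mul_sum,
    Finset.mul_sum]
  refine Finset.sum_congr rfl fun k _ => ?_
  simp only [Pi.mul_apply, Pi.pow_apply, mul_pow, heatCurve_amplitude_sq hs, ← exp_nat_mul]
  ring_nf

theorem tendsto_sqrt_nhdsGT_zero : Tendsto (fun t => √t) (𝓝[>] 0) (𝓝[>] 0) :=
  tendsto_nhdsWithin_iff.2 ⟨(continuous_sqrt.tendsto' 0 0 sqrt_zero).mono_left nhdsWithin_le_nhds,
    eventually_mem_nhdsWithin.mono fun _ ht => sqrt_pos.2 ht⟩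

open scoped Nat in
theorem tendstoUniformly_pow_mul_norm_iteratedDeriv_heatCurve_sq (q : ℝ → ℕ)
    (hq : Tendsto (fun t => (q t : ℝ) * √t) (𝓝[>] 0) atTop) (m : ℕ) :
    TendstoUniformly (fun t x => t ^ m * ‖iteratedDeriv (m + 1) (heatCurve (q t) t) x‖ ^ 2)
      (fun _ => ((2 * m + 1)‼ : ℝ) / 2 ^ m) (𝓝[>] 0) := by
  have hsum := (tendsto_rightRiemannSum_pow_mul_exp_neg_sq (2 * m + 2)
    (tendsto_sqrt_nhdsGT_zero.mono_right (nhdsWithin_mono _ Set.Ioi_subset_Ici_self)) hq).const_mul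
    (4 / √π)
  have hlim : 4 / √π * (Gamma (((2 * m + 2 : ℕ) + 1) / 2) / 2) = ((2 * m + 1)‼ : ℝ) / 2 ^ m := by
    rw [show (((2 * m + 2 : ℕ) : ℝ) + 1) / 2 = m + 1 + 1 / 2 by push_cast; ring,
      Gamma_nat_add_one_add_half]
    field_simp
    ring
  rw [hlim] at hsum
  refine (tendstoUniformly_congr ?_).2 hsum.tendstoUniformly_const
  filter_upwards [self_mem_nhdsWithin] with t ht
  exact funext fun x => pow_mul_norm_iteratedDeriv_heatCurve_sq m (q t) (le_of_lt ht) x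

/-- As `t → 0⁺` with truncation `q(t) ≥ t⁻¹`, one has `|u'(x)|² → 1` and
`t |u''(x)|² → 3/2`, uniformly in `x`. -/
theorem heatCurve_asymptotics
    (q : ℝ → ℕ) (hq : ∀ t : ℝ, 0 < t → t⁻¹ ≤ (q t : ℝ)) :
    TendstoUniformly
      (fun t : ℝ => fun x : ℝ => ‖deriv (heatCurve (q t) t) x‖ ^ 2)
      (fun _ => 1) (𝓝[>] (0 : ℝ)) ∧
    TendstoUniformly
      (fun t : ℝ => fun x : ℝ => t * ‖deriv (deriv (heatCurve (q t) t)) x‖ ^ 2)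
      (fun _ => 3 / 2) (𝓝[>] (0 : ℝ)) := by
  have hsteps : Tendsto (fun t => (q t : ℝ) * √t) (𝓝[>] 0) atTop := by
    refine tendsto_atTop_mono' _ ?_ (tendsto_inv_nhdsGT_zero.comp tendsto_sqrt_nhdsGT_zero)
    filter_upwards [self_mem_nhdsWithin] with t (ht : 0 < t)
    calc (√t)⁻¹ = t⁻¹ * √t := by
          field_simp
          exact (sq_sqrt ht.le).symm
      _ ≤ q t * √t := mul_le_mul_of_nonneg_right (hq t ht) (sqrt_nonneg t)
  constructor
  · simpa [iteratedDeriv_one] using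
      tendstoUniformly_pow_mul_norm_iteratedDeriv_heatCurve_sq q hsteps 0
  · simpa [iteratedDeriv_succ, iteratedDeriv_one] using
      tendstoUniformly_pow_mul_norm_iteratedDeriv_heatCurve_sq q hsteps 1
end
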